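/- In the banknote-contract transition system, from any reachable state in which claim = some (pid, t₀), exactly one of the transitions ChallengeClaim or ClaimUnchallenged can fire before any further BanknoteLost transition, and after it fires claim = none; consequently, along any execution, claims alternate: between any two BanknoteLost transitions there is exactly one claim-resolving transition. -/

import Mathlib

/-- A state of the banknote-contract:
serial number, active lost-banknote claim (party id and time), coins currently held
by the contract, coins released so far, and total coins deposited so far. -/
structure BState where
  serial : Option String
  claim : Option (ℕ × ℕ)
  contractCoins : ℕ
  released : ℕ
  deposited : ℕ

/-- Labels of the transitions of the banknote-contract. -/
inductive BLabel
  | banknoteLost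
  | challengeClaim
  | claimUnchallenged
  | recoverCoins

/-- The labeled transition relation of the banknote-contract `φ_$`, with parameters
`d₀` (deposit required for a lost-banknote claim) and `tTr` (the time after which an
unchallenged claim can be settled). -/
inductive BStep (d₀ tTr : ℕ) : BLabel → BState → BState → Prop
  | banknoteLost (s : BState) (pid t : ℕ) (h : s.claim = none) :
      BStep d₀ tTr .banknoteLost s
        { s with claim := some (pid, t),
                 contractCoins := s.contractCoins + d₀,
                 deposited := s.deposited + d₀ }
  | challengeClaim (s : BState) (s' : Option String) (h : s.claim ≠ none)
      (hc : d₀ ≤ s.contractCoins) :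
      BStep d₀ tTr .challengeClaim s
        { s with serial := s', claim := none,
                 contractCoins := s.contractCoins - d₀,
                 released := s.released + d₀ }
  | claimUnchallenged (s : BState) (pid t₀ t : ℕ) (s' : Option String)
      (h : s.claim = some (pid, t₀)) (ht : t₀ + tTr < t) (hc : d₀ ≤ s.contractCoins) :
      BStep d₀ tTr .claimUnchallenged s
        { s with serial := s', claim := none,
                 contractCoins := s.contractCoins - d₀,
                 released := s.released + d₀ }
  | recoverCoins (s : BState) (h : s.claim = none) :
      BStep d₀ tTr .recoverCoins s
        { s with serial := none,
                 released := s.released + s.contractCoins,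
                 contractCoins := 0 }

/-- Reachability from an initial state by finitely many transitions. -/
inductive BReachable (d₀ tTr : ℕ) (init : BState) : BState → Prop
  | refl : BReachable d₀ tTr init init
  | step {s s' : BState} {l : BLabel} :
      BReachable d₀ tTr init s → BStep d₀ tTr l s s' → BReachable d₀ tTr init s'

/-!
A pending claim rules out every transition except the two resolving ones, and each of
those clears the claim; a cleared claim stays cleared until the next `BanknoteLost`, and
no resolving transition can fire while it is clear. So between two `BanknoteLost`
transitions the first step taken with the claim set is the unique resolving one.
-/

def BLabel.IsResolving (l : BLabel) : Prop :=
  l = .challengeClaim ∨ l = .claimUnchallenged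

namespace BStep

variable {d₀ tTr : ℕ} {l : BLabel} {s s' : BState}

lemma isResolving_of_claim_ne_none (h : BStep d₀ tTr l s s') (hs : s.claim ≠ none) :
    l.IsResolving ∧ s'.claim = none := by
  cases h with
  | banknoteLost _ _ _ h => exact absurd h hs
  | challengeClaim => exact ⟨.inl rfl, rfl⟩
  | claimUnchallenged => exact ⟨.inr rfl, rfl⟩
  | recoverCoins _ h => exact absurd h hs

lemma claim_ne_none_of_isResolving (h : BStep d₀ tTr l s s') (hl : l.IsResolving) :
    s.claim ≠ none := by
  cases h with
  | banknoteLost => simp [BLabel.IsResolving] at hl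
  | recoverCoins => simp [BLabel.IsResolving] at hl
  | challengeClaim _ _ h => exact h
  | claimUnchallenged _ _ _ _ _ h => simp [h]

lemma claim_eq_none_of_ne_banknoteLost (h : BStep d₀ tTr l s s') (hl : l ≠ .banknoteLost)
    (hs : s.claim = none) : s'.claim = none := by
  cases h with
  | banknoteLost => exact absurd rfl hl
  | challengeClaim => rfl
  | claimUnchallenged => rfl
  | recoverCoins => exact hs

lemma claim_of_banknoteLost (h : BStep d₀ tTr .banknoteLost s s') :
    s.claim = none ∧ s'.claim ≠ none := by
  cases h with
  | banknoteLost _ _ _ h => exact ⟨h, Option.some_ne_none _⟩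

end BStep

section Execution

variable {d₀ tTr : ℕ} {σ : ℕ → BState} {ℓ : ℕ → BLabel} {k j : ℕ}

lemma claim_eq_none_of_no_banknoteLost
    (hstep : ∀ m, k ≤ m → m < j → BStep d₀ tTr (ℓ m) (σ m) (σ (m + 1)))
    (hlost : ∀ m, k ≤ m → m < j → ℓ m ≠ .banknoteLost) (hk : (σ k).claim = none) :
    ∀ m, k ≤ m → m ≤ j → (σ m).claim = none := by
  intro m hkm hmj
  induction m, hkm using Nat.le_induction with
  | base => exact hk
  | succ m hkm ih =>
    exact (hstep m hkm hmj).claim_eq_none_of_ne_banknoteLost (hlost m hkm hmj) (ih (by omega))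

lemma existsUnique_isResolving_of_no_banknoteLost
    (hstep : ∀ m, k ≤ m → m < j → BStep d₀ tTr (ℓ m) (σ m) (σ (m + 1)))
    (hlost : ∀ m, k ≤ m → m < j → ℓ m ≠ .banknoteLost) (hkj : k ≤ j)
    (hk : (σ k).claim ≠ none) (hj : (σ j).claim = none) :
    ∃! m, k ≤ m ∧ m < j ∧ (ℓ m).IsResolving := by
  have hkj : k < j := lt_of_le_of_ne hkj (by rintro rfl; exact hk hj)
  obtain ⟨hres, hcleared⟩ := (hstep k le_rfl hkj).isResolving_of_claim_ne_none hk
  have hnone := claim_eq_none_of_no_banknoteLost (k := k + 1)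
    (fun m hm hmj => hstep m (by omega) hmj) (fun m hm hmj => hlost m (by omega) hmj) hcleared
  refine ⟨k, ⟨le_rfl, hkj, hres⟩, ?_⟩
  rintro m ⟨hkm, hmj, hm⟩
  by_contra hne
  exact (hstep m hkm hmj).claim_ne_none_of_isResolving hm (hnone m (by omega) hmj.le)

end Execution

/-- Claims alternate in the banknote-contract. First part: from any reachable state in
which there is an active claim, neither `BanknoteLost` nor `RecoverCoins` can fire; any
transition that fires is `ChallengeClaim` or `ClaimUnchallenged` and afterwards
`claim = none`. Second part: along any finite execution from the initial state, between
any two `BanknoteLost` transitions (with no `BanknoteLost` strictly in between) there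
is exactly one claim-resolving transition. -/
theorem banknoteContract_claims_alternate (d₀ tTr : ℕ) (s₀ : String) (d : ℕ) :
    (∀ st : BState, BReachable d₀ tTr ⟨some s₀, none, d, 0, d⟩ st →
      ∀ c : ℕ × ℕ, st.claim = some c →
        (¬ ∃ st', BStep d₀ tTr .banknoteLost st st') ∧
        (¬ ∃ st', BStep d₀ tTr .recoverCoins st st') ∧
        (∀ (l : BLabel) (st' : BState), BStep d₀ tTr l st st' →
          (l = .challengeClaim ∨ l = .claimUnchallenged) ∧ st'.claim = none)) ∧
    (∀ (n : ℕ) (σ : ℕ → BState) (ℓ : ℕ → BLabel),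
      σ 0 = (⟨some s₀, none, d, 0, d⟩ : BState) →
      (∀ i < n, BStep d₀ tTr (ℓ i) (σ i) (σ (i + 1))) →
      ∀ i j, i < j → j < n → ℓ i = .banknoteLost → ℓ j = .banknoteLost →
        (∀ m, i < m → m < j → ℓ m ≠ .banknoteLost) →
        ∃! m : ℕ, i < m ∧ m < j ∧
          (ℓ m = .challengeClaim ∨ ℓ m = .claimUnchallenged)) := by
  constructor
  · intro st _ c hc
    have hpending : st.claim ≠ none := by simp [hc]
    refine ⟨?_, ?_, fun l st' h => h.isResolving_of_claim_ne_none hpending⟩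
    · rintro ⟨st', h⟩
      simpa [BLabel.IsResolving] using (h.isResolving_of_claim_ne_none hpending).1
    · rintro ⟨st', h⟩
      simpa [BLabel.IsResolving] using (h.isResolving_of_claim_ne_none hpending).1
  · intro n σ ℓ _ hstep i j hij hjn hi hj hlost
    have hstep_i := hstep i (hij.trans hjn)
    have hstep_j := hstep j hjn
    rw [hi] at hstep_i
    rw [hj] at hstep_j
    exact existsUnique_isResolving_of_no_banknoteLost (k := i + 1)
      (fun m _ hm => hstep m (hm.trans hjn)) (fun m hm hmj => hlost m hm hmj) hij
      hstep_i.claim_of_banknoteLost.2 hstep_j.claim_of_banknoteLost.1
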